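/- Let α > 0 with α ≠ 1, σ̂ > 0, c ∈ ℝ, m ∈ ℝ, s > 0 and γ = N_{m,s}. Define F(φ) = (1/(1−α)) ∫_ℝ ((1 + φ(exp(σ̂x + c) − 1))^{1−α} − 1) γ(dx). Then F is real-valued and continuous on [0, 1], and there exists a unique φ* ∈ [0, 1] with F(φ*) = max_{φ∈[0,1]} F(φ). -/

import Mathlib

/-!
With `p = 1 - α`, `u t = (t ^ p - 1) / p` and the gross return `R = exp (σh x + c)`,
`F φ = ∫ u (1 + φ (R - 1))`. Since the wealth `1 + φ (R - 1)` lies between `1` and `R`,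
`|(1 + φ (R - 1)) ^ p - 1| ≤ 2 + R ^ p`, which is Gaussian-integrable; dominated convergence gives
integrability and continuity. As `p < 1`, `u` is strictly concave on `(0, ∞)`, so
`φ ↦ u (1 + φ (R - 1))` is strictly concave on `[0, 1]` whenever `R ≠ 1`, i.e. for almost every `x`.
Hence `F` is strictly concave and continuous on the compact interval `[0, 1]`, and has exactly one
maximizer there.
-/

open MeasureTheory ProbabilityTheory Real Set
open scoped NNReal

lemma strictConcaveOn_rpow_sub_one_div {p : ℝ} (hp0 : p ≠ 0) (hp1 : p < 1) :
    StrictConcaveOn ℝ (Ioi 0) fun t : ℝ => 1 / p * (t ^ p - 1) := by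
  have hderiv : ∀ t ∈ Ioi (0 : ℝ), deriv (fun t : ℝ => 1 / p * (t ^ p - 1)) t = t ^ (p - 1) := by
    intro t ht
    have hdiff : DifferentiableAt ℝ (fun t : ℝ => t ^ p - 1) t :=
      (differentiableAt_id.rpow_const (Or.inl (ne_of_gt ht))).sub_const 1
    rw [deriv_const_mul _ hdiff, deriv_sub_const, Real.deriv_rpow_const]
    field_simp
  refine StrictAntiOn.strictConcaveOn_of_deriv (convex_Ioi 0)
    (continuousOn_const.mul ((continuousOn_id.rpow_const fun t ht => Or.inl (ne_of_gt ht)).sub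
      continuousOn_const)) ?_
  rw [interior_Ioi]
  intro x hx y hy hxy
  rw [hderiv x hx, hderiv y hy]
  exact strictAntiOn_rpow_Ioi_of_exponent_neg (by linarith) hx hy hxy

lemma quasiconvexOn_rpow (p : ℝ) : QuasiconvexOn ℝ (Ioi 0) fun t : ℝ => t ^ p := by
  rcases le_total 0 p with hp | hp
  · exact ((monotoneOn_rpow_Ici_of_exponent_nonneg hp).mono Ioi_subset_Ici_self).quasiconvexOn
      (convex_Ioi 0)
  · exact (antitoneOn_rpow_Ioi_of_exponent_nonpos hp).quasiconvexOn (convex_Ioi 0)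

lemma one_add_mul_sub_one_pos {φ E : ℝ} (hφ : φ ∈ Icc 0 1) (hE : 0 < E) :
    0 < 1 + φ * (E - 1) := by
  nlinarith [hφ.1, hφ.2, mul_nonneg hφ.1 hE.le]

lemma abs_one_add_mul_sub_one_rpow_sub_one_le (p : ℝ) {φ E : ℝ} (hφ : φ ∈ Icc 0 1)
    (hE : 0 < E) : |(1 + φ * (E - 1)) ^ p - 1| ≤ 2 + E ^ p := by
  have hcomb : 1 + φ * (E - 1) = (1 - φ) • (1 : ℝ) + φ • E := by
    simp only [smul_eq_mul]; ring
  have hle : (1 + φ * (E - 1)) ^ p ≤ max 1 (E ^ p) := by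
    simpa only [hcomb, one_rpow] using (quasiconvexOn_iff_le_max.1 (quasiconvexOn_rpow p)).2
      (mem_Ioi.2 one_pos) hE (sub_nonneg.2 hφ.2) hφ.1 (by ring)
  have h0 := rpow_nonneg (one_add_mul_sub_one_pos hφ hE).le p
  have h1 := rpow_nonneg hE.le p
  rw [abs_le]
  constructor <;> linarith [max_le_add_of_nonneg zero_le_one h1]

lemma StrictConcaveOn.comp_affineMap {E F : Type*} [AddCommGroup E] [Module ℝ E]
    [AddCommGroup F] [Module ℝ F] {f : F → ℝ} {s : Set F} (g : E →ᵃ[ℝ] F)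
    (hf : StrictConcaveOn ℝ s f) (hg : Function.Injective g) :
    StrictConcaveOn ℝ (g ⁻¹' s) (f ∘ g) :=
  ⟨hf.1.affine_preimage g, fun x hx y hy hxy a b ha hb hab => by
    simpa only [Function.comp_apply, Convex.combo_affine_apply hab]
      using hf.2 hx hy (hg.ne hxy) ha hb hab⟩

lemma Icc_subset_lineMap_one_preimage_Ioi {E : ℝ} (hE : 0 < E) :
    Icc (0 : ℝ) 1 ⊆ AffineMap.lineMap (1 : ℝ) E ⁻¹' Ioi 0 := fun φ hφ => by
  simpa [AffineMap.lineMap_apply_ring', add_comm] using one_add_mul_sub_one_pos hφ hE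

lemma lineMap_one_eq_one_add_mul_sub_one (E : ℝ) :
    ⇑(AffineMap.lineMap (1 : ℝ) E) = fun φ => 1 + φ * (E - 1) := by
  ext φ; rw [AffineMap.lineMap_apply_ring', add_comm]

lemma ConcaveOn.comp_one_add_mul_sub_one {u : ℝ → ℝ} (hu : ConcaveOn ℝ (Ioi 0) u) {E : ℝ}
    (hE : 0 < E) : ConcaveOn ℝ (Icc 0 1) fun φ => u (1 + φ * (E - 1)) := by
  simpa only [lineMap_one_eq_one_add_mul_sub_one, Function.comp_def] using
    (hu.comp_affineMap (AffineMap.lineMap 1 E)).subset (Icc_subset_lineMap_one_preimage_Ioi hE)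
      (convex_Icc 0 1)

lemma StrictConcaveOn.comp_one_add_mul_sub_one {u : ℝ → ℝ} (hu : StrictConcaveOn ℝ (Ioi 0) u)
    {E : ℝ} (hE : 0 < E) (hE1 : E ≠ 1) :
    StrictConcaveOn ℝ (Icc 0 1) fun φ => u (1 + φ * (E - 1)) := by
  simpa only [lineMap_one_eq_one_add_mul_sub_one, Function.comp_def] using
    (hu.comp_affineMap (AffineMap.lineMap 1 E) (AffineMap.lineMap_injective ℝ hE1.symm)).subset
      (Icc_subset_lineMap_one_preimage_Ioi hE) (convex_Icc 0 1)

lemma StrictConcaveOn.existsUnique_isMaxOn {E : Type*} [AddCommGroup E] [Module ℝ E]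
    [TopologicalSpace E] {s : Set E} {f : E → ℝ} (hf : StrictConcaveOn ℝ s f)
    (hc : ContinuousOn f s) (hs : IsCompact s) (hne : s.Nonempty) :
    ∃! x, x ∈ s ∧ ∀ y ∈ s, f y ≤ f x := by
  obtain ⟨x, hx, hmax⟩ := hs.exists_isMaxOn hne hc
  exact ⟨x, ⟨hx, hmax⟩, fun y ⟨hy, hymax⟩ => hf.eq_of_isMaxOn hymax hmax hy hx⟩

section Integral

variable {Ω : Type*} [MeasurableSpace Ω] {μ : Measure Ω}

lemma strictConcaveOn_integral {E : Type*} [AddCommGroup E] [Module ℝ E] {s : Set E}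
    {f : E → Ω → ℝ} (hint : ∀ x ∈ s, Integrable (f x) μ)
    (hconc : ∀ᵐ ω ∂μ, ConcaveOn ℝ s fun x => f x ω)
    (hstrict : ∃ᵐ ω ∂μ, StrictConcaveOn ℝ s fun x => f x ω) :
    StrictConcaveOn ℝ s fun x => ∫ ω, f x ω ∂μ := by
  obtain ⟨ω₀, hω₀⟩ := hstrict.exists
  refine ⟨hω₀.1, fun x hx y hy hxy a b ha hb hab => ?_⟩
  have hz : a • x + b • y ∈ s := hω₀.1 hx hy ha.le hb.le hab
  set D : Ω → ℝ := fun ω => f (a • x + b • y) ω - (a * f x ω + b * f y ω)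
  have hxy_int : Integrable (fun ω => a * f x ω + b * f y ω) μ :=
    ((hint x hx).const_mul a).add ((hint y hy).const_mul b)
  have hD_int : Integrable D μ := (hint _ hz).sub hxy_int
  have hD_nonneg : 0 ≤ᵐ[μ] D := hconc.mono fun ω hω => by
    simpa [D] using hω.2 hx hy ha.le hb.le hab
  have hD_pos : 0 < ∫ ω, D ω ∂μ := by
    rw [integral_pos_iff_support_of_nonneg_ae hD_nonneg hD_int]
    refine (pos_iff_ne_zero.2 (frequently_ae_iff.1 hstrict)).trans_le (measure_mono ?_)
    intro ω hω
    have := hω.2 hx hy hxy ha hb hab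
    simp only [smul_eq_mul] at this
    exact (sub_pos.2 this).ne'
  have hD_eq : ∫ ω, D ω ∂μ
      = ∫ ω, f (a • x + b • y) ω ∂μ - (a * ∫ ω, f x ω ∂μ + b * ∫ ω, f y ω ∂μ) := by
    rw [integral_sub (hint _ hz) hxy_int,
      integral_add ((hint x hx).const_mul a) ((hint y hy).const_mul b), integral_const_mul,
      integral_const_mul]
  rw [hD_eq] at hD_pos
  simpa only [smul_eq_mul, sub_pos] using hD_pos

variable [IsFiniteMeasure μ] {R : Ω → ℝ} {p : ℝ}

lemma integrable_one_add_mul_sub_one_rpow_sub_one (hRm : Measurable R) (hR : ∀ ω, 0 < R ω)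
    (hRp : Integrable (fun ω => R ω ^ p) μ) {φ : ℝ} (hφ : φ ∈ Icc 0 1) :
    Integrable (fun ω => (1 + φ * (R ω - 1)) ^ p - 1) μ :=
  ((integrable_const 2).add hRp).mono'
    (by fun_prop : Measurable fun ω => (1 + φ * (R ω - 1)) ^ p - 1).aestronglyMeasurable
    (ae_of_all _ fun ω => abs_one_add_mul_sub_one_rpow_sub_one_le p hφ (hR ω))

lemma continuousOn_integral_one_add_mul_sub_one_rpow_sub_one (hRm : Measurable R)
    (hR : ∀ ω, 0 < R ω) (hRp : Integrable (fun ω => R ω ^ p) μ) :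
    ContinuousOn (fun φ => ∫ ω, (1 + φ * (R ω - 1)) ^ p - 1 ∂μ) (Icc 0 1) := by
  refine continuousOn_of_dominated
    (fun φ hφ => (integrable_one_add_mul_sub_one_rpow_sub_one hRm hR hRp hφ).1)
    (fun φ hφ => ae_of_all _ fun ω => abs_one_add_mul_sub_one_rpow_sub_one_le p hφ (hR ω))
    ((integrable_const 2).add hRp) (ae_of_all _ fun ω => ?_)
  exact ((continuousOn_const.add (continuousOn_id.mul continuousOn_const)).rpow_const
    fun φ hφ => Or.inl (one_add_mul_sub_one_pos hφ (hR ω)).ne').sub continuousOn_const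

end Integral

/-- The conditional expected utility increment
`F(φ) = (1/(1-α)) ∫ ((1 + φ(exp(σ̂x + c) - 1))^(1-α) - 1) dN(m,s)` is real-valued
(its integrand is integrable) and continuous on `[0,1]`, and it has a unique
maximizer `φ* ∈ [0,1]`. -/
theorem exists_unique_maximizer_signal_gaussian
    (α : ℝ) (hα : 0 < α) (hα1 : α ≠ 1) (σh c m : ℝ) (hσh : 0 < σh)
    (s : ℝ≥0) (hs : 0 < s)
    (F : ℝ → ℝ)
    (hF : F = fun φ => (1 / (1 - α)) *
        ∫ x, ((1 + φ * (Real.exp (σh * x + c) - 1)) ^ (1 - α) - 1) ∂(gaussianReal m s)) :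
    (∀ φ ∈ Set.Icc (0 : ℝ) 1,
      Integrable (fun x => (1 + φ * (Real.exp (σh * x + c) - 1)) ^ (1 - α) - 1)
        (gaussianReal m s)) ∧
    ContinuousOn F (Set.Icc 0 1) ∧
    ∃! φs : ℝ, φs ∈ Set.Icc (0 : ℝ) 1 ∧ ∀ φ ∈ Set.Icc (0 : ℝ) 1, F φ ≤ F φs := by
  have : NullSingletonClass (gaussianReal m s) := nullSingletonClass_gaussianReal hs.ne'
  have hRm : Measurable fun x => exp (σh * x + c) := by fun_prop
  have hRp : Integrable (fun x => exp (σh * x + c) ^ (1 - α)) (gaussianReal m s) := by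
    simp_rw [← Real.exp_mul, add_mul, Real.exp_add]
    convert (integrable_exp_mul_gaussianReal (σh * (1 - α))).mul_const (exp (c * (1 - α)))
      using 4
    ring
  have hint φ (hφ : φ ∈ Icc (0 : ℝ) 1) :=
    integrable_one_add_mul_sub_one_rpow_sub_one hRm (fun x => exp_pos _) hRp hφ
  have hu := strictConcaveOn_rpow_sub_one_div (sub_ne_zero.2 hα1.symm) (by linarith)
  have hconc : StrictConcaveOn ℝ (Icc 0 1) F := by
    simp_rw [hF, ← integral_const_mul]
    refine strictConcaveOn_integral (fun φ hφ => (hint φ hφ).const_mul _)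
      (ae_of_all _ fun x => hu.concaveOn.comp_one_add_mul_sub_one (exp_pos _)) ?_
    refine (Measure.ae_ne _ (-c / σh)).frequently.mono fun x hx =>
      hu.comp_one_add_mul_sub_one (exp_pos _) (Real.exp_eq_one_iff _ |>.not.2 ?_)
    exact fun h => hx (by field_simp; linarith)
  have hcont : ContinuousOn F (Icc 0 1) := hF ▸ continuousOn_const.mul
    (continuousOn_integral_one_add_mul_sub_one_rpow_sub_one hRm (fun x => exp_pos _) hRp)
  exact ⟨hint, hcont, hconc.existsUnique_isMaxOn hcont isCompact_Icc (nonempty_Icc.2 zero_le_one)⟩
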